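/- For 2 ≤ ℓ < λ ≤ n-1 with λ ≥ ℓ+2 and any k, k' with λ < k ≤ n, and any tuple (i,j,k') of the matching field B^{λ-1}_{ℓ-1} satisfying ℓ < i < λ < j < k' (or with j < ℓ < i < λ, j < k'), the vertex sum decomposes: v_{(ℓ,λ,k)} + v_{(i,j,k')} = v_{(i,λ,k)} + v_{(ℓ,j,k')}, where all four tuples (ℓ,λ,k), (i,j,k'), (i,λ,k), (ℓ,j,k') are tuples of B^{λ-1}_{ℓ-1}. Consequently the segment from v_{(ℓ,λ,k)} to v_{(i,j,k')} is not an edge of the matching field polytope P_{B^{λ-1}_{ℓ-1}}. -/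

import Mathlib

open RealInnerProductSpace

/-- A vertex of a set `P` is a point `v` such that `{v}` is an exposed (0-dimensional) face. -/
def IsVertex {ι : Type*} [Fintype ι] (P : Set (EuclideanSpace ℝ ι)) (v : EuclideanSpace ℝ ι) : Prop :=
  IsExposed ℝ P {v}

/-- An edge of `P` is a 1-dimensional exposed face. -/
def IsEdge {ι : Type*} [Fintype ι] (P : Set (EuclideanSpace ℝ ι))
    (a b : EuclideanSpace ℝ ι) : Prop :=
  a ≠ b ∧ IsExposed ℝ P (segment ℝ a b)

/-- The vertex of `ℝ^{3×n}` associated to a tuple `(a,b,c)` (entries 1-indexed):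
`e_{1,a} + e_{2,b} + e_{3,c}`. -/
def tupleVertex (n : ℕ) (a b c : ℕ) : EuclideanSpace ℝ (Fin 3 × Fin n) :=
  WithLp.toLp 2 fun (p : Fin 3 × Fin n) =>
    if (p.1 = 0 ∧ (p.2 : ℕ) + 1 = a) ∨ (p.1 = 1 ∧ (p.2 : ℕ) + 1 = b) ∨
        (p.1 = 2 ∧ (p.2 : ℕ) + 1 = c) then 1 else 0

/-- The tuples of the intermediate matching field `B^{λ-1}_{ℓ-1}` for Gr(3,n)
(case `λ - 1 < n`). -/
def interTuples' (n ℓ lam : ℕ) : Set (ℕ × ℕ × ℕ) :=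
  { t | (∃ p q r : ℕ, 1 ≤ p ∧ p < q ∧ q ≤ ℓ - 1 ∧ q < r ∧ r ≤ n ∧ t = (p, q, r)) ∨
        (∃ p q r : ℕ, 1 ≤ p ∧ p ≤ ℓ - 1 ∧ ℓ - 1 < q ∧ q < r ∧ r ≤ n ∧ t = (q, p, r)) ∨
        (∃ q r : ℕ, ℓ < q ∧ q ≤ lam - 1 ∧ q < r ∧ r ≤ n ∧ t = (q, ℓ, r)) ∨
        (∃ q r : ℕ, lam - 1 < q ∧ q < r ∧ r ≤ n ∧ t = (ℓ, q, r)) ∨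
        (∃ p q r : ℕ, ℓ < p ∧ p < q ∧ q < r ∧ r ≤ n ∧ t = (p, q, r)) }

/-- The matching field polytope of `B^{λ-1}_{ℓ-1}`. -/
def interPolytope (n ℓ lam : ℕ) : Set (EuclideanSpace ℝ (Fin 3 × Fin n)) :=
  convexHull ℝ ((fun t : ℕ × ℕ × ℕ => tupleVertex n t.1 t.2.1 t.2.2) '' interTuples' n ℓ lam)

/-! Swapping the first entries of two tuples does not change the sum of their vertices, so
`v(ℓ,λ,k) + v(i,j,k') = v(i,λ,k) + v(ℓ,j,k')`. If the segment `[v(ℓ,λ,k), v(i,j,k')]` were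
an exposed, hence extreme, face, then the common midpoint of the two pairs would force
`v(i,λ,k)` onto that segment; but the functional `x ↦ x(1,i) + x(2,λ)` equals `1` at both
endpoints and `2` at `v(i,λ,k)`. -/

theorem IsExtreme.mem_segment_of_add_eq {𝕜 E : Type*} [Field 𝕜] [LinearOrder 𝕜] [IsStrictOrderedRing 𝕜]
    [AddCommGroup E] [Module 𝕜 E] {P : Set E} {a b c d : E}
    (h : IsExtreme 𝕜 P (segment 𝕜 a b)) (hc : c ∈ P) (hd : d ∈ P) (hsum : a + b = c + d) :
    c ∈ segment 𝕜 a b := by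
  have hmid : midpoint 𝕜 c d = midpoint 𝕜 a b := by
    rw [midpoint_eq_smul_add, midpoint_eq_smul_add, hsum]
  exact h.left_mem_of_mem_openSegment hc hd (hmid ▸ midpoint_mem_segment a b)
    (midpoint_mem_openSegment c d)

theorem not_isEdge_of_add_eq {ι : Type*} [Fintype ι] {P : Set (EuclideanSpace ℝ ι)}
    {a b c d : EuclideanSpace ℝ ι} (hc : c ∈ P) (hd : d ∈ P) (hsum : a + b = c + d)
    (hcab : c ∉ segment ℝ a b) : ¬ IsEdge P a b :=
  fun ⟨_, hexp⟩ => hcab (hexp.isExtreme.mem_segment_of_add_eq hc hd hsum)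

section tupleVertex

variable (n : ℕ)

@[simp]
lemma tupleVertex_apply_zero (a b c : ℕ) (m : Fin n) :
    tupleVertex n a b c (0, m) = if (m : ℕ) + 1 = a then 1 else 0 := by
  simp [tupleVertex]

@[simp]
lemma tupleVertex_apply_one (a b c : ℕ) (m : Fin n) :
    tupleVertex n a b c (1, m) = if (m : ℕ) + 1 = b then 1 else 0 := by
  simp [tupleVertex]

@[simp]
lemma tupleVertex_apply_two (a b c : ℕ) (m : Fin n) :
    tupleVertex n a b c (2, m) = if (m : ℕ) + 1 = c then 1 else 0 := by
  simp [tupleVertex]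

lemma tupleVertex_add_tupleVertex_swap_fst (a b c a' b' c' : ℕ) :
    tupleVertex n a b c + tupleVertex n a' b' c' = tupleVertex n a' b c + tupleVertex n a b' c' := by
  ext ⟨r, m⟩
  fin_cases r <;> simp [add_comm]

lemma tupleVertex_swap_fst_notMem_segment {a b c a' b' c' : ℕ} (ha : a ≠ a') (hb : b ≠ b')
    (ha' : 0 < a') (ha'n : a' ≤ n) (hb0 : 0 < b) (hbn : b ≤ n) :
    tupleVertex n a' b c ∉ segment ℝ (tupleVertex n a b c) (tupleVertex n a' b' c') := by
  let φ : EuclideanSpace ℝ (Fin 3 × Fin n) →ₗ[ℝ] ℝ :=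
    EuclideanSpace.projₗ (0, ⟨a' - 1, by omega⟩) + EuclideanSpace.projₗ (1, ⟨b - 1, by omega⟩)
  intro h
  have := Set.mem_image_of_mem φ h
  rw [← φ.coe_toAffineMap, image_segment] at this
  simp [φ, Nat.sub_add_cancel ha', Nat.sub_add_cancel hb0, ha.symm, hb] at this

end tupleVertex

lemma bounds_of_mem_interTuples' {n ℓ lam p q r : ℕ} (hℓ : 0 < ℓ) (hlam : ℓ < lam)
    (h : (p, q, r) ∈ interTuples' n ℓ lam) : 0 < p ∧ 0 < q ∧ p < r ∧ q < r ∧ r ≤ n := by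
  rcases h with ⟨_, _, _, _, _, _, _, _, h⟩ | ⟨_, _, _, _, _, _, _, _, h⟩ | ⟨_, _, _, _, _, _, h⟩ |
    ⟨_, _, _, _, _, h⟩ | ⟨_, _, _, _, _, _, _, h⟩ <;>
  · simp only [Prod.mk.injEq] at h
    omega

lemma tupleVertex_mem_interPolytope {n ℓ lam a b c : ℕ} (h : (a, b, c) ∈ interTuples' n ℓ lam) :
    tupleVertex n a b c ∈ interPolytope n ℓ lam :=
  subset_convexHull ℝ _ ⟨(a, b, c), h, rfl⟩

theorem stmt14_general (n ℓ lam : ℕ) (hℓ : 2 ≤ ℓ) (hlam : ℓ + 2 ≤ lam)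
    (k k' i j : ℕ) (hk1 : lam < k) (hk2 : k ≤ n)
    (hij : (i, j, k') ∈ interTuples' n ℓ lam)
    (hcase : (ℓ < i ∧ i < lam ∧ lam < j ∧ j < k') ∨ (j < ℓ ∧ ℓ < i ∧ i < lam ∧ j < k')) :
    tupleVertex n ℓ lam k + tupleVertex n i j k'
      = tupleVertex n i lam k + tupleVertex n ℓ j k' ∧
    (ℓ, lam, k) ∈ interTuples' n ℓ lam ∧
    (i, lam, k) ∈ interTuples' n ℓ lam ∧
    (ℓ, j, k') ∈ interTuples' n ℓ lam ∧
    ¬ IsEdge (interPolytope n ℓ lam) (tupleVertex n ℓ lam k) (tupleVertex n i j k') := by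
  have hbounds := bounds_of_mem_interTuples' (by omega) (by omega) hij
  have hsum := tupleVertex_add_tupleVertex_swap_fst n ℓ lam k i j k'
  have hmem₁ : (ℓ, lam, k) ∈ interTuples' n ℓ lam :=
    Or.inr <| Or.inr <| Or.inr <| Or.inl ⟨lam, k, by omega, hk1, hk2, rfl⟩
  have hmem₂ : (i, lam, k) ∈ interTuples' n ℓ lam :=
    Or.inr <| Or.inr <| Or.inr <| Or.inr ⟨i, lam, k, by omega, by omega, hk1, hk2, rfl⟩
  have hmem₃ : (ℓ, j, k') ∈ interTuples' n ℓ lam := by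
    rcases hcase with h | h
    · exact Or.inr <| Or.inr <| Or.inr <| Or.inl ⟨j, k', by omega, by omega, by omega, rfl⟩
    · exact Or.inr <| Or.inl ⟨j, ℓ, k', by omega, by omega, by omega, by omega, by omega, rfl⟩
  refine ⟨hsum, hmem₁, hmem₂, hmem₃, not_isEdge_of_add_eq (tupleVertex_mem_interPolytope hmem₂)
    (tupleVertex_mem_interPolytope hmem₃) hsum ?_⟩
  exact tupleVertex_swap_fst_notMem_segment n (by omega) (by omega) (by omega) (by omega)
    (by omega) (by omega)

theorem stmt14 (n ℓ lam : ℕ) (hℓ : 2 ≤ ℓ) (hlam : ℓ + 2 ≤ lam) (hlam2 : lam ≤ n - 1)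
    (k k' i j : ℕ) (hk1 : lam < k) (hk2 : k ≤ n)
    (hij : (i, j, k') ∈ interTuples' n ℓ lam)
    (hcase : (ℓ < i ∧ i < lam ∧ lam < j ∧ j < k') ∨ (j < ℓ ∧ ℓ < i ∧ i < lam ∧ j < k')) :
    tupleVertex n ℓ lam k + tupleVertex n i j k'
      = tupleVertex n i lam k + tupleVertex n ℓ j k' ∧
    (ℓ, lam, k) ∈ interTuples' n ℓ lam ∧
    (i, lam, k) ∈ interTuples' n ℓ lam ∧
    (ℓ, j, k') ∈ interTuples' n ℓ lam ∧
    ¬ IsEdge (interPolytope n ℓ lam) (tupleVertex n ℓ lam k) (tupleVertex n i j k') :=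
  stmt14_general n ℓ lam hℓ hlam k k' i j hk1 hk2 hij hcase
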